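/- Suppose (S, I, P) is a positive classical solution of problem (1.3) on Ω. Then k > c, and the pair (u, P) with u := S + I is a positive classical solution of problem (1.6). -/

import Mathlib

/-!
At an interior maximum `x₀` of `I` the Laplacian of `I` is nonpositive (restrict to coordinate
lines), so the `I`-equation gives `k S ≥ b + c (S + I) + ℓ P > c S` at `x₀`, whence `k > c`.
Adding the `S`- and `I`-equations gives the equation of `(1.6)` for `u = S + I`.
-/

open Set

noncomputable def vlap {N : ℕ} (f : EuclideanSpace ℝ (Fin N) → ℝ)
    (x : EuclideanSpace ℝ (Fin N)) : ℝ :=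
  ∑ i : Fin N, fderiv ℝ (fun y => fderiv ℝ f y (EuclideanSpace.single i 1)) x
    (EuclideanSpace.single i 1)

/-- `f` is twice continuously differentiable in `Ω`, continuous on `closure Ω`,
strictly positive in `Ω` and vanishes on the boundary `frontier Ω`. -/
def PosDirichlet {N : ℕ} (Ω : Set (EuclideanSpace ℝ (Fin N)))
    (f : EuclideanSpace ℝ (Fin N) → ℝ) : Prop :=
  ContDiffOn ℝ 2 f Ω ∧ ContinuousOn f (closure Ω) ∧ (∀ x ∈ Ω, 0 < f x) ∧
    ∀ x ∈ frontier Ω, f x = 0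

open Filter Topology

theorem deriv_deriv_nonpos_of_isLocalMax {g : ℝ → ℝ} {t : ℝ} (hmax : IsLocalMax g t)
    (hc : ContinuousAt g t) : deriv (deriv g) t ≤ 0 := by
  by_contra! hpos
  -- By the second-derivative test `t` is also a local minimum, so `g` is locally constant.
  have hmin := isLocalMin_of_deriv_deriv_pos hpos hmax.deriv_eq_zero hc
  have hconst : g =ᶠ[𝓝 t] fun _ => g t := by
    filter_upwards [hmax, hmin] with s hs₁ hs₂ using le_antisymm hs₁ hs₂
  have hderiv : deriv g =ᶠ[𝓝 t] fun _ => 0 := by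
    simpa only [deriv_const'] using hconst.deriv
  simp [hderiv.deriv_eq] at hpos

section LineRestriction

variable {E F : Type*} [NormedAddCommGroup E] [NormedSpace ℝ E]
  [NormedAddCommGroup F] [NormedSpace ℝ F]

theorem HasFDerivAt.hasDerivAt_add_smul {f : E → F} {L : E →L[ℝ] F} {x v : E} {s : ℝ}
    (hf : HasFDerivAt f L (x + s • v)) : HasDerivAt (fun t : ℝ => f (x + t • v)) (L v) s := by
  simpa only [one_smul, Function.comp_def, id] using
    hf.comp_hasDerivAt s (((hasDerivAt_id s).smul_const v).const_add x)

theorem ContDiffAt.differentiableAt_fderiv_apply {f : E → F} {x : E} (hf : ContDiffAt ℝ 2 f x)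
    (v : E) : DifferentiableAt ℝ (fun y => fderiv ℝ f y v) x :=
  ((hf.fderiv_right (m := 1) (by norm_num)).differentiableAt (by norm_num)).clm_apply
    (differentiableAt_const v)

theorem ContDiffAt.fderiv_fderiv_apply_nonpos_of_isLocalMax {f : E → ℝ} {x : E}
    (hf : ContDiffAt ℝ 2 f x) (hmax : IsLocalMax f x) (v : E) :
    fderiv ℝ (fun y => fderiv ℝ f y v) x v ≤ 0 := by
  set g : ℝ → ℝ := fun t => f (x + t • v)
  have hline : Continuous fun t : ℝ => x + t • v := by fun_prop
  have hline0 : Tendsto (fun t : ℝ => x + t • v) (𝓝 0) (𝓝 x) := by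
    simpa only [zero_smul, add_zero] using hline.tendsto 0
  have hderiv : deriv g =ᶠ[𝓝 0] fun t => fderiv ℝ f (x + t • v) v := by
    filter_upwards [hline0.eventually (hf.eventually (by simp))] with t ht
    exact ((ht.differentiableAt (by norm_num)).hasFDerivAt.hasDerivAt_add_smul).deriv
  have hsecond : HasDerivAt (fun t : ℝ => fderiv ℝ f (x + t • v) v)
      (fderiv ℝ (fun y => fderiv ℝ f y v) x v) 0 := by
    refine HasFDerivAt.hasDerivAt_add_smul (f := fun y => fderiv ℝ f y v) ?_
    rw [zero_smul, add_zero]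
    exact (hf.differentiableAt_fderiv_apply v).hasFDerivAt
  have hgmax : IsLocalMax g 0 := by
    filter_upwards [hline0.eventually hmax] with t ht
    simpa only [g, zero_smul, add_zero] using ht
  rw [← hsecond.deriv, ← hderiv.deriv_eq]
  exact deriv_deriv_nonpos_of_isLocalMax hgmax
    (hf.continuousAt.comp_of_eq hline.continuousAt (by simp))

end LineRestriction

section Laplacian

variable {N : ℕ}

theorem vlap_nonpos_of_isLocalMax {f : EuclideanSpace ℝ (Fin N) → ℝ}
    {x : EuclideanSpace ℝ (Fin N)} (hf : ContDiffAt ℝ 2 f x) (hmax : IsLocalMax f x) :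
    vlap f x ≤ 0 :=
  Finset.sum_nonpos fun _ _ => hf.fderiv_fderiv_apply_nonpos_of_isLocalMax hmax _

theorem vlap_add {f g : EuclideanSpace ℝ (Fin N) → ℝ} {x : EuclideanSpace ℝ (Fin N)}
    (hf : ContDiffAt ℝ 2 f x) (hg : ContDiffAt ℝ 2 g x) :
    vlap (fun y => f y + g y) x = vlap f x + vlap g x := by
  rw [vlap, vlap, vlap, ← Finset.sum_add_distrib]
  refine Finset.sum_congr rfl fun i _ => ?_
  set v := EuclideanSpace.single (𝕜 := ℝ) i (1 : ℝ)
  have hfderiv : (fun y => fderiv ℝ (fun z => f z + g z) y v)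
      =ᶠ[𝓝 x] fun y => fderiv ℝ f y v + fderiv ℝ g y v := by
    filter_upwards [hf.eventually (by simp), hg.eventually (by simp)] with y hfy hgy
    rw [fderiv_fun_add (hfy.differentiableAt (by norm_num)) (hgy.differentiableAt (by norm_num))]
    rfl
  rw [hfderiv.fderiv_eq,
    fderiv_fun_add (hf.differentiableAt_fderiv_apply v) (hg.differentiableAt_fderiv_apply v)]
  rfl

end Laplacian

namespace PosDirichlet

variable {N : ℕ} {Ω : Set (EuclideanSpace ℝ (Fin N))} {f g : EuclideanSpace ℝ (Fin N) → ℝ}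

theorem add (hf : PosDirichlet Ω f) (hg : PosDirichlet Ω g) :
    PosDirichlet Ω (fun x => f x + g x) :=
  ⟨hf.1.add hg.1, hf.2.1.add hg.2.1, fun x hx => add_pos (hf.2.2.1 x hx) (hg.2.2.1 x hx),
    fun x hx => by simp only [hf.2.2.2 x hx, hg.2.2.2 x hx, add_zero]⟩

theorem exists_isLocalMax (hf : PosDirichlet Ω f) (hΩ : IsOpen Ω)
    (hΩbd : Bornology.IsBounded Ω) (hne : Ω.Nonempty) : ∃ x ∈ Ω, IsLocalMax f x := by
  obtain ⟨z, hz⟩ := hne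
  obtain ⟨x, hx, hxmax⟩ := hΩbd.isCompact_closure.exists_isMaxOn
    ⟨z, subset_closure hz⟩ hf.2.1
  -- The maximum is positive, so it is not attained on the boundary, where `f` vanishes.
  have hxΩ : x ∈ Ω := by
    by_contra hxΩ
    have hfx : f x = 0 := hf.2.2.2 x ⟨hx, by rwa [hΩ.interior_eq]⟩
    linarith [hf.2.2.1 z hz, isMaxOn_iff.mp hxmax z (subset_closure hz)]
  refine ⟨x, hxΩ, ?_⟩
  filter_upwards [hΩ.mem_nhds hxΩ] with y hy using hxmax (subset_closure hy)

theorem exists_vlap_nonpos (hf : PosDirichlet Ω f) (hΩ : IsOpen Ω)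
    (hΩbd : Bornology.IsBounded Ω) (hne : Ω.Nonempty) : ∃ x ∈ Ω, vlap f x ≤ 0 := by
  obtain ⟨x, hx, hmax⟩ := hf.exists_isLocalMax hΩ hΩbd hne
  exact ⟨x, hx, vlap_nonpos_of_isLocalMax (hf.1.contDiffAt (hΩ.mem_nhds hx)) hmax⟩

end PosDirichlet

theorem stmt9_general {N : ℕ} (Ω : Set (EuclideanSpace ℝ (Fin N)))
    (hΩopen : IsOpen Ω) (hΩconn : IsConnected Ω) (hΩbd : Bornology.IsBounded Ω)
    (a b c k el th rh d D : ℝ) (hb : 0 < b) (hc : 0 < c)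
    (hel : 0 < el) (hd : 0 < d)
    (S I P : EuclideanSpace ℝ (Fin N) → ℝ)
    (hS : PosDirichlet Ω S) (hI : PosDirichlet Ω I) (hP : PosDirichlet Ω P)
    (heqS : ∀ x ∈ Ω, -d * vlap S x
      = a * (S x + I x) - b * S x - c * (S x + I x) * S x - k * S x * I x
        - el * S x * P x)
    (heqI : ∀ x ∈ Ω, -d * vlap I x
      = k * S x * I x - b * I x - c * (S x + I x) * I x - el * I x * P x)
    (heqP : ∀ x ∈ Ω, -D * vlap P x = th * (S x + I x) * P x - rh * P x) :
    c < k ∧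
    PosDirichlet Ω (fun x => S x + I x) ∧ PosDirichlet Ω P ∧
    (∀ x ∈ Ω, -d * vlap (fun x => S x + I x) x
      = (a - b) * (S x + I x) - c * (S x + I x) ^ 2 - el * (S x + I x) * P x) ∧
    (∀ x ∈ Ω, -D * vlap P x = th * (S x + I x) * P x - rh * P x) := by
  have hck : c < k := by
    obtain ⟨x₀, hx₀, hlap⟩ := hI.exists_vlap_nonpos hΩopen hΩbd hΩconn.nonempty
    have hS₀ := hS.2.2.1 x₀ hx₀
    have hI₀ := hI.2.2.1 x₀ hx₀
    have hP₀ := hP.2.2.1 x₀ hx₀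
    have hrate : 0 ≤ k * S x₀ - b - c * (S x₀ + I x₀) - el * P x₀ := by
      refine nonneg_of_mul_nonneg_right (a := I x₀) ?_ hI₀
      calc 0 ≤ -d * vlap I x₀ := mul_nonneg_of_nonpos_of_nonpos (by linarith) hlap
        _ = _ := by rw [heqI x₀ hx₀]; ring
    have hgap : 0 < (k - c) * S x₀ := by nlinarith [mul_pos hc hI₀, mul_pos hel hP₀]
    exact sub_pos.mp (pos_of_mul_pos_left hgap hS₀.le)
  refine ⟨hck, hS.add hI, hP, fun x hx => ?_, heqP⟩
  rw [vlap_add (hS.1.contDiffAt (hΩopen.mem_nhds hx)) (hI.1.contDiffAt (hΩopen.mem_nhds hx))]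
  linear_combination heqS x hx + heqI x hx

/-- If (S, I, P) is a positive classical solution of (1.3), then k > c and
(S + I, P) is a positive classical solution of (1.6). -/
theorem stmt9 {N : ℕ} (hN : 1 ≤ N) (Ω : Set (EuclideanSpace ℝ (Fin N)))
    (hΩopen : IsOpen Ω) (hΩconn : IsConnected Ω) (hΩbd : Bornology.IsBounded Ω)
    (a b c k el th rh d D : ℝ) (ha : 0 < a) (hb : 0 < b) (hc : 0 < c) (hk : 0 < k)
    (hel : 0 < el) (hth : 0 < th) (hrh : 0 < rh) (hd : 0 < d) (hD : 0 < D) (hab : b < a)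
    (S I P : EuclideanSpace ℝ (Fin N) → ℝ)
    (hS : PosDirichlet Ω S) (hI : PosDirichlet Ω I) (hP : PosDirichlet Ω P)
    (heqS : ∀ x ∈ Ω, -d * vlap S x
      = a * (S x + I x) - b * S x - c * (S x + I x) * S x - k * S x * I x
        - el * S x * P x)
    (heqI : ∀ x ∈ Ω, -d * vlap I x
      = k * S x * I x - b * I x - c * (S x + I x) * I x - el * I x * P x)
    (heqP : ∀ x ∈ Ω, -D * vlap P x = th * (S x + I x) * P x - rh * P x) :
    c < k ∧
    PosDirichlet Ω (fun x => S x + I x) ∧ PosDirichlet Ω P ∧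
    (∀ x ∈ Ω, -d * vlap (fun x => S x + I x) x
      = (a - b) * (S x + I x) - c * (S x + I x) ^ 2 - el * (S x + I x) * P x) ∧
    (∀ x ∈ Ω, -D * vlap P x = th * (S x + I x) * P x - rh * P x) :=
  stmt9_general Ω hΩopen hΩconn hΩbd a b c k el th rh d D hb hc hel hd S I P hS hI hP heqS heqI heqP
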